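/- arXiv:1808.09063 — 3 statements merged into one kernel-verified Lean document; each statement's English description precedes it below -/
import Mathlib

section
/- If a tree of maximum degree at most 4 has at least five leaves, then it admits no greedy rectilinear drawing: in any rectilinear (axis-parallel, planar, bend-free) drawing of the tree, there exist two leaves u and v such that u lies in the cell of v or v lies in the cell of u; consequently the drawing is not greedy. -/
open Function

noncomputable section

abbrev Plane := EuclideanSpace ℝ (Fin 2)

def IsGreedy {V : Type*} (G : SimpleGraph V) (p : V → Plane) : Prop :=
  ∀ u v : V, u ≠ v → ∃ (n : ℕ) (c : Fin (n + 1) → V), c 0 = u ∧ c (Fin.last n) = v ∧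
    (∀ i : Fin n, G.Adj (c i.castSucc) (c i.succ)) ∧
    (∀ i : Fin n, dist (p (c i.succ)) (p v) < dist (p (c i.castSucc)) (p v))

def cell {V : Type*} (G : SimpleGraph V) (p : V → Plane) (v : V) : Set Plane :=
  {q | ∀ w : V, G.Adj v w → dist q (p v) < dist q (p w)}

/-- Every edge is drawn as a horizontal or vertical segment. -/
def AxisParallel {V : Type*} (G : SimpleGraph V) (p : V → Plane) : Prop :=
  ∀ u v : V, G.Adj u v → p u 0 = p v 0 ∨ p u 1 = p v 1

/-- Distinct edges intersect only at common endpoints (planarity of the drawing). -/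
def NonCrossing {V : Type*} (G : SimpleGraph V) (p : V → Plane) : Prop :=
  ∀ a b c d : V, G.Adj a b → G.Adj c d →
    ∀ q : Plane, q ∈ segment ℝ (p a) (p b) → q ∈ segment ℝ (p c) (p d) →
      ((a = c ∧ b = d) ∨ (a = d ∧ b = c)) ∨
        ∃ x : V, (x = a ∨ x = b) ∧ (x = c ∨ x = d) ∧ q = p x

/-!
If two leaves `u`, `v` with neighbours `u'`, `v'` point the same way, i.e. `u - u'` and `v - v'`
lie on a common ray, then according to the sign of `⟪u - v, u - u'⟫` either `u` is strictly closer
to `v` than to `v'`, or `v` is strictly closer to `u` than to `u'`; so one leaf lies in the other's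
cell, which blocks every distance-decreasing path into it. In a rectilinear drawing a leaf can only
point north, south, east or west, so among five leaves two point the same way.
-/

/-- The axis of an axis-parallel vector (junk value `1` for the zero vector). -/
def axis (x : Plane) : Fin 2 := if x 0 = 0 then 1 else 0

/-- The orientation (north, south, east or west) of a nonzero axis-parallel vector. -/
def axisDirection (x : Plane) : Fin 2 × Bool := (axis x, decide (0 < x (axis x)))

theorem eq_smul_single_axis {x : Plane} (hx : x 0 = 0 ∨ x 1 = 0) :
    x = x (axis x) • EuclideanSpace.single (axis x) 1 := by
  unfold axis
  split_ifs with h0 <;> ext j <;> fin_cases j <;> simp_all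

theorem sameRay_of_axisDirection_eq {x y : Plane} (hx : x 0 = 0 ∨ x 1 = 0)
    (hy : y 0 = 0 ∨ y 1 = 0) (h : axisDirection x = axisDirection y) : SameRay ℝ x y := by
  obtain ⟨hxy, hsign⟩ := Prod.mk.inj h
  have hsign : 0 < x (axis x) ↔ 0 < y (axis x) := by simpa [← hxy] using hsign
  have hmul : 0 ≤ x (axis x) * y (axis x) := by
    by_cases hpos : 0 < x (axis x)
    · exact mul_nonneg hpos.le (hsign.1 hpos).le
    · exact mul_nonneg_of_nonpos_of_nonpos (not_lt.1 hpos) (not_lt.1 (mt hsign.2 hpos))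
  rw [eq_smul_single_axis hx, eq_smul_single_axis hy, ← hxy]
  exact sameRay_smul_smul_of_mul_nonneg hmul

theorem dist_lt_or_dist_lt_of_sameRay {E : Type*} [NormedAddCommGroup E] [InnerProductSpace ℝ E]
    {a a' b b' : E} (ha : a ≠ a') (hb : b ≠ b') (h : SameRay ℝ (a - a') (b - b')) :
    dist a b < dist a b' ∨ dist b a < dist b a' := by
  obtain ⟨r, hr, hrx⟩ := h.exists_pos_left (sub_ne_zero.2 ha) (sub_ne_zero.2 hb)
  have hx : 0 < ‖a - a'‖ := norm_pos_iff.2 (sub_ne_zero.2 ha)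
  have hab' : a - b' = (a - b) + r • (a - a') := by rw [hrx]; abel
  have hba' : b - a' = (a - a') - (a - b) := by abel
  simp only [dist_eq_norm, ← pow_lt_pow_iff_left₀ (norm_nonneg _) (norm_nonneg _) two_ne_zero]
  rcases le_or_gt 0 (inner ℝ (a - b) (a - a')) with hi | hi
  · left
    rw [hab', norm_add_sq_real, inner_smul_right, norm_smul, Real.norm_of_nonneg hr.le]
    nlinarith [mul_pos hr hx]
  · right
    rw [hba', norm_sub_rev b a, norm_sub_sq_real (a - a') (a - b), real_inner_comm]
    nlinarith

theorem mem_cell_or_mem_cell_of_sameRay {V : Type*} {G : SimpleGraph V} {p : V → Plane}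
    {u u' v v' : V} (hu : ∀ w, G.Adj u w → w = u') (hv : ∀ w, G.Adj v w → w = v')
    (hpu : p u ≠ p u') (hpv : p v ≠ p v') (h : SameRay ℝ (p u - p u') (p v - p v')) :
    p u ∈ cell G p v ∨ p v ∈ cell G p u :=
  (dist_lt_or_dist_lt_of_sameRay hpu hpv h).imp (fun h w hw => hv w hw ▸ h)
    (fun h w hw => hu w hw ▸ h)

theorem not_isGreedy_of_mem_cell {V : Type*} {G : SimpleGraph V} {p : V → Plane} {u v : V}
    (huv : u ≠ v) (h : p u ∈ cell G p v) : ¬ IsGreedy G p := by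
  intro hg
  obtain ⟨n, c, hc0, hcl, hadj, hdist⟩ := hg v u huv.symm
  cases n with
  | zero => exact huv (hcl.symm.trans hc0)
  | succ n =>
    have hv : c (Fin.castSucc 0) = v := hc0
    have hstep := hdist 0
    rw [hv, dist_comm (p (c _)), dist_comm (p v)] at hstep
    exact (h _ (hv ▸ hadj 0)).not_gt hstep

theorem tree_five_leaves_not_greedy_general {V : Type*} [Fintype V]
    (G : SimpleGraph V) [DecidableRel G.Adj]
    (hleaves : 5 ≤ (Finset.univ.filter fun v : V => G.degree v = 1).card)
    (p : V → Plane) (hp : Injective p)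
    (haxis : AxisParallel G p) :
    (∃ u v : V, G.degree u = 1 ∧ G.degree v = 1 ∧ u ≠ v ∧
        (p u ∈ cell G p v ∨ p v ∈ cell G p u)) ∧
      ¬ IsGreedy G p := by
  choose nb hnb using fun v : {v // G.degree v = 1} =>
    SimpleGraph.degree_eq_one_iff_existsUnique_adj.1 v.2
  have hpar (v : {v // G.degree v = 1}) : (p v - p (nb v)) 0 = 0 ∨ (p v - p (nb v)) 1 = 0 := by
    simpa [sub_eq_zero] using haxis _ _ (hnb v).1
  have hcard : Fintype.card (Fin 2 × Bool) < Fintype.card {v // G.degree v = 1} := by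
    rw [Fintype.card_subtype, Fintype.card_prod, Fintype.card_fin, Fintype.card_bool]
    exact hleaves
  obtain ⟨u, v, huv, hdir⟩ := Fintype.exists_ne_map_eq_of_card_lt
    (fun v : {v // G.degree v = 1} => axisDirection (p v - p (nb v))) hcard
  have hcell := mem_cell_or_mem_cell_of_sameRay (hnb u).2 (hnb v).2 (hp.ne (hnb u).1.ne)
    (hp.ne (hnb v).1.ne) (sameRay_of_axisDirection_eq (hpar u) (hpar v) hdir)
  have huv : (u : V) ≠ v := Subtype.coe_ne_coe.2 huv
  refine ⟨⟨u, v, u.2, v.2, huv, hcell⟩, ?_⟩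
  rcases hcell with h | h
  exacts [not_isGreedy_of_mem_cell huv h, not_isGreedy_of_mem_cell huv.symm h]

/-- A tree of maximum degree at most 4 with at least five leaves admits no greedy
rectilinear drawing: in every rectilinear drawing two leaves lie in each other's
cells, so the drawing is not greedy. -/
theorem tree_five_leaves_not_greedy {V : Type*} [Fintype V] [DecidableEq V]
    (G : SimpleGraph V) [DecidableRel G.Adj]
    (hT : G.IsTree) (hdeg : ∀ v : V, G.degree v ≤ 4)
    (hleaves : 5 ≤ (Finset.univ.filter fun v : V => G.degree v = 1).card)
    (p : V → Plane) (hp : Injective p)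
    (haxis : AxisParallel G p) (hplanar : NonCrossing G p) :
    (∃ u v : V, G.degree u = 1 ∧ G.degree v = 1 ∧ u ≠ v ∧
        (p u ∈ cell G p v ∨ p v ∈ cell G p u)) ∧
      ¬ IsGreedy G p :=
  tree_five_leaves_not_greedy_general G hleaves p hp haxis
end
end

section
/- A finite directed acyclic graph D contains a directed Hamiltonian path if and only if for every two distinct vertices u and v of D, there is a directed path from u to v or a directed path from v to u. -/
/-!
In an acyclic digraph reachability is a partial order, and the hypothesis makes it total. List
the vertices increasingly: for consecutive `a`, `b` there is a path `a ⟶ c ⟶* b`, and `c` can lie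
neither before `a` nor after `b` without closing a cycle, so `c = b` and `a ⟶ b` is an edge.
-/

open Relation

namespace List

variable {α : Type*}

theorem exists_nodup_forall_mem_pairwise [Finite α] (R : α → α → Prop) [Std.Total R]
    [IsTrans α R] : ∃ l : List α, l.Nodup ∧ (∀ a, a ∈ l) ∧ l.Pairwise R := by
  classical
  cases nonempty_fintype α
  exact ⟨Finset.univ.toList.insertionSort R,
    (perm_insertionSort R _).nodup_iff.2 (Finset.nodup_toList _),
    fun a => (mem_insertionSort R).2 (Finset.mem_toList.2 (Finset.mem_univ a)),
    pairwise_insertionSort R _⟩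

variable {r : α → α → Prop}

theorem IsChain.reflTransGen_total {l : List α} (hl : l.IsChain r) (hmem : ∀ a, a ∈ l)
    (a b : α) : ReflTransGen r a b ∨ ReflTransGen r b a := by
  have : Std.Symm fun x y => ReflTransGen r x y ∨ ReflTransGen r y x := ⟨fun _ _ => Or.symm⟩
  have hpw : l.Pairwise fun x y => ReflTransGen r x y ∨ ReflTransGen r y x :=
    (hl.imp fun _ _ => ReflTransGen.single).pairwise.imp Or.inl
  exact hpw.forall_of_forall (fun _ _ => .inl .refl) (hmem a) (hmem b)

theorem isChain_of_pairwise_transGen (hacyc : ∀ a, ¬ TransGen r a a) {l : List α}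
    (hl : l.Pairwise (TransGen r)) (hmem : ∀ a, a ∈ l) : l.IsChain r := by
  rw [isChain_iff_forall_rel_of_append_cons_cons]
  rintro a b l₁ l₂ rfl
  simp only [pairwise_append, pairwise_cons, mem_cons] at hl
  obtain ⟨c, hac, hcb⟩ := TransGen.head'_iff.1 (hl.2.1.1 b (.inl rfl))
  obtain rfl | hcb := reflTransGen_iff_eq_or_transGen.1 hcb
  · exact hac
  exfalso
  simp only [mem_append, mem_cons] at hmem
  rcases hmem c with hc | rfl | rfl | hc
  · exact hacyc a (.head hac (hl.2.2 c hc a (.inl rfl)))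
  · exact hacyc c (.single hac)
  · exact hacyc c hcb
  · exact hacyc b (.trans (hl.2.1.2.1 c hc) hcb)

end List

/-- A finite DAG contains a directed Hamiltonian path iff any two distinct vertices
are comparable under reachability. -/
theorem dag_hamiltonian_iff_total_reachability {V : Type*} [Fintype V]
    (r : V → V → Prop) (hacyc : ∀ v : V, ¬ Relation.TransGen r v v) :
    (∃ l : List V, l.Nodup ∧ (∀ v : V, v ∈ l) ∧ l.Chain' r) ↔
      ∀ u v : V, u ≠ v →
        Relation.ReflTransGen r u v ∨ Relation.ReflTransGen r v u := by
  constructor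
  · rintro ⟨l, -, hmem, hchain⟩ u v -
    exact hchain.reflTransGen_total hmem u v
  · intro htot
    have : Std.Total (ReflTransGen r) :=
      ⟨fun u v => (eq_or_ne u v).elim (fun h => .inl (h ▸ .refl)) (htot u v)⟩
    obtain ⟨l, hnodup, hmem, hsorted⟩ := List.exists_nodup_forall_mem_pairwise (ReflTransGen r)
    have hl : l.Pairwise (TransGen r) := (hsorted.and hnodup).imp fun ⟨h, hne⟩ =>
      (reflTransGen_iff_eq_or_transGen.1 h).resolve_left hne.symm
    exact ⟨l, hnodup, hmem, List.isChain_of_pairwise_transGen hacyc hl hmem⟩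
end

section
/- Let D be a finite DAG with st-ordering v₁,…,v_m, and for indices 1 ≤ i < j ≤ m let D⟨i,j⟩ be the subgraph induced by {v_i,…,v_j}. If the ordering is such that every induced interval D⟨i,j⟩ is connected, then for any two vertices u, w of D there is a directed path from u to w or from w to u. -/
/-- The vertices occupying positions `i` through `j` of the ordering `f`. -/
def IntervalSet {V : Type*} {m : ℕ} (f : Fin m ≃ V) (i j : Fin m) : Set V :=
  {v : V | i ≤ f.symm v ∧ f.symm v ≤ j}

/-- Weak connectivity within a vertex set `S`: connectivity in the underlying
undirected graph of the subgraph induced by `S`. -/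
def WConn {V : Type*} (r : V → V → Prop) (S : Set V) (a b : V) : Prop :=
  Relation.ReflTransGen (fun x y => (r x y ∨ r y x) ∧ x ∈ S ∧ y ∈ S) a b

lemma step_succ {V : Type*} {m : ℕ}
    (r : V → V → Prop) (hacyc : ∀ v : V, ¬ Relation.TransGen r v v)
    (f : Fin m ≃ V) (htop : ∀ i j : Fin m, r (f i) (f j) → i < j)
    (hconn : ∀ i j : Fin m, i < j → ∀ a b : V,
      a ∈ IntervalSet f i j → b ∈ IntervalSet f i j →
        WConn r (IntervalSet f i j) a b)
    (i : Fin m) (h : i.val + 1 < m) : r (f i) (f ⟨i.val + 1, h⟩) := by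
  set i' : Fin m := ⟨i.val + 1, h⟩ with hi'
  have hii' : i < i' := by simp [hi', Fin.lt_def]
  have hmem1 : f i ∈ IntervalSet f i i' := by
    constructor <;> simp [IntervalSet, le_of_lt hii']
  have hmem2 : f i' ∈ IntervalSet f i i' := by
    constructor <;> simp [IntervalSet, le_of_lt hii']
  have hw := hconn i i' hii' (f i) (f i') hmem1 hmem2
  rcases Relation.ReflTransGen.cases_head hw with heq | ⟨y, hstep, _⟩
  · exact absurd (f.injective heq) (ne_of_lt hii')
  · obtain ⟨hr, _, hy1, hy2⟩ := hstep
    have hcase : f.symm y = i ∨ f.symm y = i' := by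
      rw [Fin.le_def] at hy1 hy2
      rcases Nat.lt_or_ge (f.symm y).val (i.val + 1) with h1 | h1
      · left; apply Fin.ext; omega
      · right; apply Fin.ext; simpa [hi'] using le_antisymm hy2 h1
    rcases hcase with hc | hc
    · have : y = f i := by rw [← hc, Equiv.apply_symm_apply]
      subst this
      rcases hr with hr | hr <;> exact absurd (Relation.TransGen.single hr) (hacyc _)
    · have : y = f i' := by rw [← hc, Equiv.apply_symm_apply]
      subst this
      rcases hr with hr | hr
      · exact hr
      · exact absurd (htop _ _ hr) (not_lt_of_gt hii')

/-- If `v₁,…,v_m` is an `st`-ordering of a finite DAG in which every induced interval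
subgraph is weakly connected, then any two vertices are comparable under
reachability. -/
theorem connected_intervals_total_reachability {V : Type*} [Fintype V] {m : ℕ}
    (r : V → V → Prop) (hacyc : ∀ v : V, ¬ Relation.TransGen r v v)
    (f : Fin m ≃ V) (htop : ∀ i j : Fin m, r (f i) (f j) → i < j)
    (hconn : ∀ i j : Fin m, i < j → ∀ a b : V,
      a ∈ IntervalSet f i j → b ∈ IntervalSet f i j →
        WConn r (IntervalSet f i j) a b) :
    ∀ u w : V, Relation.ReflTransGen r u w ∨ Relation.ReflTransGen r w u := by
  have reach : ∀ n : ℕ, ∀ i j : Fin m, i.val + n = j.val →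
      Relation.ReflTransGen r (f i) (f j) := by
    intro n
    induction n with
    | zero => intro i j hij; have : i = j := Fin.ext (by omega); subst this; rfl
    | succ n ih =>
      intro i j hij
      have h1 : i.val + 1 < m := by omega
      exact Relation.ReflTransGen.head
        (step_succ r hacyc f htop hconn i h1) (ih ⟨i.val + 1, h1⟩ j (by simp; omega))
  intro u w
  rcases le_total (f.symm u) (f.symm w) with h | h
  · left
    have := reach ((f.symm w).val - (f.symm u).val) (f.symm u) (f.symm w)
      (by rw [Fin.le_def] at h; omega)
    simpa using this
  · right
    have := reach ((f.symm u).val - (f.symm w).val) (f.symm w) (f.symm u)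
      (by rw [Fin.le_def] at h; omega)
    simpa using this
end
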